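/- arXiv:1010.2441 — 2 statements merged into one kernel-verified Lean document; each statement's English description precedes it below -/
import Mathlib

section
/- Let p, u, q ∈ [0,1] and i ≥ 1. With Y as in the OR-dilution-noise model on K items, conditional on the Hamming weight of a fixed subset of K-i of the X variables being l, the probability that Y = 0 equals (1-q)·u^l·(1 - p + p·u)^i. -/
open Finset

/-- Probability mass of an outcome `(x, d, z)` in the noisy group testing
model: the `x`'s are i.i.d. Bernoulli(p), the `d`'s i.i.d. Bernoulli(1-u),
and `z` is Bernoulli(q), all independent. -/
def gtProb (K : ℕ) (p u q : ℝ)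
    (ω : (Fin K → Bool) × (Fin K → Bool) × Bool) : ℝ :=
  (∏ m : Fin K, if ω.1 m then p else 1 - p) *
  (∏ m : Fin K, if ω.2.1 m then 1 - u else u) *
  (if ω.2.2 then q else 1 - q)

/-- The test outcome Y = (⋁_m (X_m ∧ D_m)) ∨ Z. -/
def gtY (K : ℕ) (ω : (Fin K → Bool) × (Fin K → Bool) × Bool) : Bool :=
  (decide (∃ m : Fin K, ω.1 m ∧ ω.2.1 m)) || ω.2.2
/-!
Given `X = x`, summing out `D` and `Z` factorises over the coordinates: `Y = 0` forces `Z = 0`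
and `D_m = 0` wherever `x_m = 1`, so `P(X = x, Y = 0) = (1 - q) ∏_m (x_m ? p u : 1 - p)`, while
`P(X = x) = ∏_m (x_m ? p : 1 - p)`. Summing `∏_m (x_m ? A : B)` over the `x` with exactly `l` ones
in `S` gives `C(|S|, l) A^l B^(|S| - l) (A + B)^(K - |S|)`; comparing `(A, B) = (p u, 1 - p)`
with `(A, B) = (p, 1 - p)` gives the factor `u^l (1 - p + p u)^i`.
-/

section BoolFun

variable {α R : Type*} [Fintype α] [DecidableEq α] [CommSemiring R]

theorem sum_boolFun_prod_of_forall (P : α → Bool → Prop) [∀ m, DecidablePred (P m)]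
    [DecidablePred fun x : α → Bool => ∀ m, P m (x m)] (f : α → Bool → R) :
    ∑ x ∈ univ.filter fun x : α → Bool => ∀ m, P m (x m), ∏ m, f m (x m)
      = ∏ m, ∑ b ∈ univ.filter (P m), f m b := by
  rw [prod_univ_sum]
  congr 1
  ext x
  simp

theorem sum_boolFun_prod_ite (A B : R) :
    ∑ x : α → Bool, ∏ m, (if x m then A else B) = (A + B) ^ Fintype.card α := by
  rw [show (A + B) ^ Fintype.card α = ∏ _m : α, ∑ b : Bool, if b then A else B by simp,
    Fintype.prod_sum]

theorem prod_ite_boolFun_eq_pow (x : α → Bool) (A B : R) :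
    ∏ m, (if x m then A else B) = A ^ #{m | x m} * B ^ (Fintype.card α - #{m | x m}) := by
  rw [prod_ite, prod_const, prod_const, filter_not, card_sdiff_of_subset (filter_subset _ _),
    card_univ]

theorem sum_boolFun_prod_ite_of_card_eq (l : ℕ) (A B : R) :
    ∑ x : α → Bool with #{m | x m} = l, ∏ m, (if x m then A else B)
      = (Fintype.card α).choose l * A ^ l * B ^ (Fintype.card α - l) := by
  have hcard : #{x : α → Bool | #{m | x m} = l} = (Fintype.card α).choose l := by
    rw [← card_univ, ← card_powersetCard]
    refine card_nbij' (fun x => ({m | x m} : Finset α)) (fun T m => decide (m ∈ T)) ?_ ?_ ?_ ?_ <;>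
      intro x hx <;> simp_all
  rw [sum_congr rfl fun x hx => by rw [prod_ite_boolFun_eq_pow, (mem_filter.1 hx).2], sum_const,
    hcard, nsmul_eq_mul, mul_assoc]

theorem sum_boolFun_prod_of_subset_card_eq (S : Finset α) (l : ℕ) (f : α → Bool → R) :
    ∑ x : α → Bool with #{m ∈ S | x m} = l, ∏ m, f m (x m)
      = (∑ y : S → Bool with #{m | y m} = l, ∏ m : S, f m (y m)) *
          ∑ z : {m // m ∉ S} → Bool, ∏ m : {m // m ∉ S}, f m (z m) := by
  have hweight (x : α → Bool) : #{m ∈ S | x m} = #{m : S | x m} := by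
    simp only [card_filter]
    exact (sum_coe_sort S _).symm
  rw [sum_filter, sum_filter, sum_mul_sum, ← Fintype.sum_prod_type']
  refine Fintype.sum_equiv (Equiv.piEquivPiSubtypeProd (· ∈ S) fun _ => Bool) _ _ fun x => ?_
  rw [Equiv.piEquivPiSubtypeProd_apply, hweight, ← Fintype.prod_subtype_mul_prod_subtype (· ∈ S)]
  split_ifs
  · -- the two products over `S` use different `Fintype ↥S` instances
    congr
    exact Subsingleton.elim _ _
  · rw [zero_mul]

theorem sum_boolFun_prod_ite_of_subset_card_eq (S : Finset α) (l : ℕ) (A B : R) :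
    ∑ x : α → Bool with #{m ∈ S | x m} = l, ∏ m, (if x m then A else B)
      = (#S).choose l * A ^ l * B ^ (#S - l) * (A + B) ^ (Fintype.card α - #S) := by
  rw [sum_boolFun_prod_of_subset_card_eq S l fun _ b => if b then A else B,
    sum_boolFun_prod_ite_of_card_eq, sum_boolFun_prod_ite, Fintype.card_subtype_compl,
    Fintype.card_coe]

end BoolFun

theorem sum_filter_and_fst {β γ M : Type*} [Fintype β] [Fintype γ] [AddCommMonoid M]
    (P : β → Prop) (Q : β × γ → Prop) [DecidablePred P] [DecidablePred Q] (f : β × γ → M) :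
    ∑ ω : β × γ with Q ω ∧ P ω.1, f ω = ∑ x : β with P x, ∑ y : γ with Q (x, y), f (x, y) := by
  simp only [sum_filter, Fintype.sum_prod_type, ite_and]
  exact sum_congr rfl fun x _ => by split_ifs <;> simp

theorem sum_filter_fst {β γ M : Type*} [Fintype β] [Fintype γ] [AddCommMonoid M]
    (P : β → Prop) [DecidablePred P] (f : β × γ → M) :
    ∑ ω : β × γ with P ω.1, f ω = ∑ x : β with P x, ∑ y : γ, f (x, y) := by
  rw [← univ_product_univ, filter_product_left, sum_product]

section GroupTesting

variable {K : ℕ} (p u q : ℝ)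

theorem gtProb_mk (x d : Fin K → Bool) (z : Bool) :
    gtProb K p u q (x, d, z) = (∏ m, if x m then p else 1 - p) *
      (∏ m, if d m then 1 - u else u) * (if z then q else 1 - q) := rfl

theorem sum_gtProb_fiber (x : Fin K → Bool) :
    ∑ dz : (Fin K → Bool) × Bool, gtProb K p u q (x, dz) = ∏ m, (if x m then p else 1 - p) := by
  simp only [Fintype.sum_prod_type, gtProb_mk, ← mul_sum, ← sum_mul, sum_boolFun_prod_ite,
    Fintype.sum_bool, ↓reduceIte, Bool.false_eq_true]
  ring

theorem filter_gtY_eq_false (x : Fin K → Bool) :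
    ({dz : (Fin K → Bool) × Bool | gtY K (x, dz) = false} : Finset _)
      = ({d : Fin K → Bool | ∀ m, x m = false ∨ d m = false} : Finset _) ×ˢ {false} := by
  ext ⟨d, z⟩
  simp [gtY, imp_iff_not_or]

theorem sum_gtProb_fiber_gtY_eq_false (x : Fin K → Bool) :
    ∑ dz : (Fin K → Bool) × Bool with gtY K (x, dz) = false, gtProb K p u q (x, dz)
      = (1 - q) * ∏ m, (if x m then p * u else 1 - p) := by
  rw [filter_gtY_eq_false, sum_product]
  simp only [sum_singleton, gtProb_mk, ← sum_mul, ← mul_sum]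
  rw [sum_boolFun_prod_of_forall (fun m b => x m = false ∨ b = false)
    fun _ b => if b then 1 - u else u, mul_comm, ← prod_mul_distrib]
  congr 1
  refine prod_congr rfl fun m _ => ?_
  by_cases hx : x m <;> simp [hx, filter_insert, filter_singleton, mul_comm]

end GroupTesting

/-- The conditional probability is stated multiplied through by `P(w(X_S) = l)`. -/
theorem prob_Y_eq_zero_given_subset_weight_general (K i : ℕ) (hiK : i ≤ K)
    (p u q : ℝ) (S : Finset (Fin K)) (hS : S.card = K - i)
    (l : ℕ) :
    ∑ ω ∈ Finset.univ.filter
        (fun ω : (Fin K → Bool) × (Fin K → Bool) × Bool =>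
          gtY K ω = false ∧ (S.filter fun m => ω.1 m).card = l),
        gtProb K p u q ω
      = (1 - q) * u ^ l * (1 - p + p * u) ^ i *
        ∑ ω ∈ Finset.univ.filter
          (fun ω : (Fin K → Bool) × (Fin K → Bool) × Bool =>
            (S.filter fun m => ω.1 m).card = l), gtProb K p u q ω := by
  have hcompl : Fintype.card (Fin K) - #S = i := by rw [Fintype.card_fin, hS]; omega
  rw [sum_filter_and_fst fun x : Fin K → Bool => #{m ∈ S | x m} = l,
    sum_filter_fst fun x : Fin K → Bool => #{m ∈ S | x m} = l]
  simp only [sum_gtProb_fiber_gtY_eq_false, sum_gtProb_fiber, ← mul_sum,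
    sum_boolFun_prod_ite_of_subset_card_eq, hcompl]
  ring

/-- Conditional on the Hamming weight of the X-variables indexed by a fixed
set S of size K - i being l, the probability that Y = 0 equals
(1-q)·u^l·(1-p+pu)^i, expressed as
P(Y = 0 ∧ w(X_S) = l) = (1-q)·u^l·(1-p+pu)^i · P(w(X_S) = l). -/
theorem prob_Y_eq_zero_given_subset_weight (K i : ℕ) (hi : 1 ≤ i) (hiK : i ≤ K)
    (p u q : ℝ) (hp : p ∈ Set.Icc (0:ℝ) 1) (hu : u ∈ Set.Icc (0:ℝ) 1)
    (hq : q ∈ Set.Icc (0:ℝ) 1) (S : Finset (Fin K)) (hS : S.card = K - i)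
    (l : ℕ) :
    ∑ ω ∈ Finset.univ.filter
        (fun ω : (Fin K → Bool) × (Fin K → Bool) × Bool =>
          gtY K ω = false ∧ (S.filter fun m => ω.1 m).card = l),
        gtProb K p u q ω
      = (1 - q) * u ^ l * (1 - p + p * u) ^ i *
        ∑ ω ∈ Finset.univ.filter
          (fun ω : (Fin K → Bool) × (Fin K → Bool) × Bool =>
            (S.filter fun m => ω.1 m).card = l), gtProb K p u q ω :=
  prob_Y_eq_zero_given_subset_weight_general K i hiK p u q S hS l
end

section
/- The mutual information I(X_{(i)}; X_{(K-i)}, Y) in the noisy group testing model equals I₁ + I₂, where I₁ = i(1-q)(1-p+pu)^K·( (pu/(1-p+pu))·log₂ u − log₂(1-p+pu) ) and I₂ = (1/ln 2)·∑_{j=2}^∞ [(1-q)^j/(j(j-1))]·(1-p+pu^j)^K·(1 − ((1-p+pu)^j/(1-p+pu^j))^i). -/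
/-!
After multiplying by `log 2`, the binary entropy splits as
`θ (1 - log θ) - (θ + (1 - θ) log (1 - θ))`, and on `[0, 1]` the last bracket is the series
`∑_{n ≥ 2} θⁿ / (n (n - 1))`. Average over `j ~ Bin(N, p)` with `θ = c uʲ`. The first part is
given by the generating function `E[tʲ] = (1 - p + p t)^N` and its derivative. For the second
part, swap the finite and the infinite sum to get `∑ₙ cⁿ / (n (n - 1)) (1 - p + p uⁿ)^N`.
`H(Y | X_{(K)})` is this average with `N = K`, `c = 1 - q`, and `H(Y | X_{(K-i)})` is the one with
`N = K - i`, `c = (1 - q)(1 - p + p u)^i`. Subtracting, the logarithmic parts leave `I₁` and the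
series leave `I₂`.
-/

open Finset

/-- The binary entropy function. -/
noncomputable def binEnt (θ : ℝ) : ℝ :=
  -θ * Real.logb 2 θ - (1 - θ) * Real.logb 2 (1 - θ)

/-- H(Y | X_{(K)}) in the noisy group testing model, as a binomial sum. -/
noncomputable def HYfull (K : ℕ) (p u q : ℝ) : ℝ :=
  ∑ j ∈ Finset.range (K + 1),
    (K.choose j : ℝ) * p ^ j * (1 - p) ^ (K - j) * binEnt ((1 - q) * u ^ j)

/-- H(Y | X_{(K-i)}) in the noisy group testing model, as a binomial sum. -/
noncomputable def HYsub (K i : ℕ) (p u q : ℝ) : ℝ :=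
  ∑ l ∈ Finset.range (K - i + 1),
    ((K - i).choose l : ℝ) * p ^ l * (1 - p) ^ (K - i - l) *
      binEnt ((1 - q) * u ^ l * (1 - p + p * u) ^ i)

/-- The lead term I₁. -/
noncomputable def I1 (K i : ℕ) (p u q : ℝ) : ℝ :=
  (i : ℝ) * (1 - q) * (1 - p + p * u) ^ K *
    (p * u / (1 - p + p * u) * Real.logb 2 u - Real.logb 2 (1 - p + p * u))

/-- The error term I₂ (the series index j ≥ 2 is written as j = m + 2). -/
noncomputable def I2 (K i : ℕ) (p u q : ℝ) : ℝ :=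
  (1 / Real.log 2) *
    ∑' m : ℕ,
      (1 - q) ^ (m + 2) / ((m + 2) * (m + 1)) *
        (1 - p + p * u ^ (m + 2)) ^ K *
        (1 - ((1 - p + p * u) ^ (m + 2) / (1 - p + p * u ^ (m + 2))) ^ i)

open Real

section Binomial

variable {R : Type*} [CommRing R]

def binomWeight (N : ℕ) (p : R) (j : ℕ) : R := N.choose j * p ^ j * (1 - p) ^ (N - j)

theorem sum_binomWeight_mul_pow (N : ℕ) (p t : R) :
    ∑ j ∈ range (N + 1), binomWeight N p j * t ^ j = (1 - p + p * t) ^ N := by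
  rw [show 1 - p + p * t = p * t + (1 - p) by ring, add_pow]
  refine sum_congr rfl fun j _ => ?_
  rw [binomWeight, mul_pow]
  ring

theorem sum_binomWeight_mul_natCast_mul_pow (N : ℕ) (p t : R) :
    ∑ j ∈ range (N + 1), binomWeight N p j * j * t ^ j =
      N * (p * t) * (1 - p + p * t) ^ (N - 1) := by
  cases N with
  | zero => simp
  | succ N =>
    rw [sum_range_succ', add_tsub_cancel_right, ← sum_binomWeight_mul_pow, mul_sum]
    simp only [Nat.cast_zero, mul_zero, zero_mul, add_zero]
    refine sum_congr rfl fun j _ => ?_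
    have hchoose := congrArg (Nat.cast : ℕ → R) (Nat.add_one_mul_choose_eq N j)
    simp only [binomWeight, Nat.succ_sub_succ]
    push_cast at hchoose ⊢
    linear_combination -p ^ (j + 1) * (1 - p) ^ (N - j) * t ^ (j + 1) * hchoose

end Binomial

theorem log_two_mul_binEnt (θ : ℝ) :
    log 2 * binEnt θ = θ * (1 - log θ) - (θ + (1 - θ) * log (1 - θ)) := by
  have hlog2 : log 2 ≠ 0 := (log_pos one_lt_two).ne'
  simp only [binEnt, logb]
  field_simp
  ring

theorem hasSum_one_div_add_two_mul_add_one :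
    HasSum (fun n : ℕ => 1 / (((n : ℝ) + 2) * ((n : ℝ) + 1))) 1 := by
  have hpartial (N : ℕ) :
      ∑ n ∈ range N, 1 / (((n : ℝ) + 2) * ((n : ℝ) + 1)) = 1 - 1 / ((N : ℝ) + 1) := by
    have := sum_range_sub' (fun n : ℕ => 1 / ((n : ℝ) + 1)) N
    simp only [Nat.cast_zero, zero_add, div_one, Nat.cast_add_one] at this
    rw [← this]
    refine sum_congr rfl fun n _ => ?_
    field_simp
    ring
  rw [hasSum_iff_tendsto_nat_of_nonneg (fun n => by positivity)]
  simp only [hpartial]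
  simpa using tendsto_one_div_add_atTop_nhds_zero_nat.const_sub (1 : ℝ)

theorem hasSum_pow_add_two_div_of_abs_lt_one {x : ℝ} (hx : |x| < 1) :
    HasSum (fun n : ℕ => x ^ (n + 2) / (((n : ℝ) + 2) * ((n : ℝ) + 1)))
      (x + (1 - x) * log (1 - x)) := by
  have hlog := hasSum_pow_div_log_of_abs_lt_one hx
  have hshift := (hasSum_nat_add_iff' 1).2 hlog
  simp only [sum_range_one, Nat.cast_zero, zero_add, pow_one, div_one] at hshift
  rw [show x + (1 - x) * log (1 - x) = x * -log (1 - x) - (-log (1 - x) - x) by ring]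
  refine ((hlog.mul_left x).sub hshift).congr_fun fun n => ?_
  push_cast
  field_simp
  ring

theorem hasSum_pow_add_two_div {x : ℝ} (hx₀ : -1 < x) (hx₁ : x ≤ 1) :
    HasSum (fun n : ℕ => x ^ (n + 2) / (((n : ℝ) + 2) * ((n : ℝ) + 1)))
      (x + (1 - x) * log (1 - x)) := by
  rcases hx₁.lt_or_eq with hx₁ | rfl
  · exact hasSum_pow_add_two_div_of_abs_lt_one (abs_lt.2 ⟨hx₀, hx₁⟩)
  · simpa using hasSum_one_div_add_two_mul_add_one

noncomputable def avgBinEnt (N : ℕ) (p u c : ℝ) : ℝ :=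
  ∑ j ∈ range (N + 1), binomWeight N p j * binEnt (c * u ^ j)

theorem hasSum_avgBinEnt {N : ℕ} {p u c : ℝ} (hu₀ : 0 < u) (hu₁ : u ≤ 1) (hc₀ : 0 < c)
    (hc₁ : c ≤ 1) (ha : 1 - p + p * u ≠ 0) :
    HasSum (fun n : ℕ => c ^ (n + 2) / ((n + 2) * (n + 1)) * (1 - p + p * u ^ (n + 2)) ^ N)
      (c * (1 - p + p * u) ^ N * (1 - log c - N * (p * u / (1 - p + p * u)) * log u) -
        log 2 * avgBinEnt N p u c) := by
  have hθ (j : ℕ) : 0 ≤ c * u ^ j ∧ c * u ^ j ≤ 1 :=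
    ⟨by positivity, mul_le_one₀ hc₁ (pow_nonneg hu₀.le j) (pow_le_one₀ hu₀.le hu₁)⟩
  have hseries := hasSum_sum fun j (_ : j ∈ range (N + 1)) =>
    (hasSum_pow_add_two_div (by linarith [(hθ j).1]) (hθ j).2).mul_left (binomWeight N p j)
  have hmean : ∑ j ∈ range (N + 1), binomWeight N p j * j * u ^ j =
      (1 - p + p * u) ^ N * (N * (p * u / (1 - p + p * u))) := by
    rw [sum_binomWeight_mul_natCast_mul_pow]
    rcases N with _ | N
    · simp
    · rw [add_tsub_cancel_right, pow_succ]
      field_simp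
  have hterm (j : ℕ) :
      binomWeight N p j * (c * u ^ j + (1 - c * u ^ j) * log (1 - c * u ^ j)) =
        c * (1 - log c) * (binomWeight N p j * u ^ j) - c * log u * (binomWeight N p j * j * u ^ j)
          - log 2 * (binomWeight N p j * binEnt (c * u ^ j)) := by
    rw [mul_left_comm (log 2), log_two_mul_binEnt, log_mul hc₀.ne' (pow_pos hu₀ j).ne', log_pow]
    ring
  rw [sum_congr rfl fun j _ => hterm j, sum_sub_distrib, sum_sub_distrib, ← mul_sum, ← mul_sum,
    ← mul_sum, sum_binomWeight_mul_pow, hmean] at hseries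
  convert! hseries.congr_fun (fun n => ?_) using 1
  · rw [avgBinEnt]
    ring
  · rw [← sum_binomWeight_mul_pow, mul_sum]
    refine sum_congr rfl fun j _ => ?_
    rw [mul_pow, pow_right_comm]
    ring

theorem HYfull_eq_avgBinEnt (K : ℕ) (p u q : ℝ) : HYfull K p u q = avgBinEnt K p u (1 - q) :=
  rfl

theorem HYsub_eq_avgBinEnt (K i : ℕ) (p u q : ℝ) :
    HYsub K i p u q = avgBinEnt (K - i) p u ((1 - q) * (1 - p + p * u) ^ i) :=
  sum_congr rfl fun l _ => by rw [mul_right_comm (1 - q)]; rfl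

theorem pow_mul_one_sub_div_pow {𝕜 : Type*} [Field 𝕜] {K i : ℕ} (hiK : i ≤ K) {b : 𝕜}
    (hb : b ≠ 0) (y : 𝕜) : b ^ K * (1 - (y / b) ^ i) = b ^ K - y ^ i * b ^ (K - i) := by
  rw [← Nat.sub_add_cancel hiK, pow_add, Nat.add_sub_cancel, div_pow]
  field_simp

theorem mutual_information_eq_I1_add_I2_general (K i : ℕ) (hiK : i ≤ K)
    (p u q : ℝ) (hp : p ∈ Set.Ioo (0:ℝ) 1) (hu : u ∈ Set.Ioo (0:ℝ) 1)
    (hq : q ∈ Set.Ico (0:ℝ) 1) :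
    HYsub K i p u q - HYfull K p u q = I1 K i p u q + I2 K i p u q := by
  obtain ⟨hp₀, hp₁⟩ := hp
  obtain ⟨hu₀, hu₁⟩ := hu
  obtain ⟨hq₀, hq₁⟩ := hq
  have ha₀ : 0 < 1 - p + p * u := by nlinarith
  have ha₁ : 1 - p + p * u ≤ 1 := by nlinarith
  have hc₀ : 0 < 1 - q := by linarith
  have hfull := hasSum_avgBinEnt (N := K) hu₀ hu₁.le hc₀ (by linarith) ha₀.ne'
  have hsub := hasSum_avgBinEnt (N := K - i) hu₀ hu₁.le (mul_pos hc₀ (pow_pos ha₀ i))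
    (mul_le_one₀ (by linarith) (pow_nonneg ha₀.le i) (pow_le_one₀ ha₀.le ha₁)) ha₀.ne'
  have hpow : (1 - p + p * u) ^ i * (1 - p + p * u) ^ (K - i) = (1 - p + p * u) ^ K := by
    rw [← pow_add, Nat.add_sub_cancel' hiK]
  rw [I2, HasSum.tsum_eq ((hfull.sub hsub).congr_fun fun m => ?_)]
  · have hlog2 : log 2 ≠ 0 := (log_pos one_lt_two).ne'
    rw [HYsub_eq_avgBinEnt, HYfull_eq_avgBinEnt, I1, logb, logb,
      log_mul hc₀.ne' (pow_pos ha₀ i).ne', log_pow, Nat.cast_sub hiK, ← hpow]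
    field_simp
    ring
  · have hb : 1 - p + p * u ^ (m + 2) ≠ 0 := by
      nlinarith [pow_pos hu₀ (m + 2), pow_le_one₀ hu₀.le hu₁.le (n := m + 2)]
    rw [mul_assoc, pow_mul_one_sub_div_pow hiK hb, mul_pow, pow_right_comm _ i]
    ring

/-- The mutual information I(X_{(i)}; X_{(K-i)}, Y) = H(Y|X_{(K-i)}) − H(Y|X_{(K)})
equals I₁ + I₂. -/
theorem mutual_information_eq_I1_add_I2 (K i : ℕ) (hi : 1 ≤ i) (hiK : i ≤ K)
    (p u q : ℝ) (hp : p ∈ Set.Ioo (0:ℝ) 1) (hu : u ∈ Set.Ioo (0:ℝ) 1)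
    (hq : q ∈ Set.Ico (0:ℝ) 1) :
    HYsub K i p u q - HYfull K p u q = I1 K i p u q + I2 K i p u q :=
  mutual_information_eq_I1_add_I2_general K i hiK p u q hp hu hq
end
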